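/- arXiv:1207.1705 — 4 statements merged into one kernel-verified Lean document; each statement's English description precedes it below -/
import Mathlib

section
/- Let C be a univalent updown category. For objects p, q with |q| − |p| = n > 0, the multiplicity u(p;q) = d(p;q) equals the number of strings (h_1, ..., h_n) of morphisms, each between adjacent ranks, whose composite h_n ∘ h_{n−1} ∘ ... ∘ h_1 is a morphism from p to q. -/
structure UDData where
  Obj : Type
  Hom : Obj → Obj → Type
  idm : ∀ p, Hom p p
  comp : ∀ {p q r : Obj}, Hom p q → Hom q r → Hom p r
  idm_comp : ∀ {p q : Obj} (f : Hom p q), comp (idm p) f = f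
  comp_idm : ∀ {p q : Obj} (f : Hom p q), comp f (idm q) = f
  comp_assoc : ∀ {p q r s : Obj} (f : Hom p q) (g : Hom q r) (h : Hom r s),
    comp (comp f g) h = comp f (comp g h)
  rank : Obj → ℕ
  zhat : Obj

namespace UDData

def cast {C : UDData} {p q q' : C.Obj} (h : q = q') (f : C.Hom p q) : C.Hom p q' := h ▸ f

def Chain (C : UDData) : ℕ → C.Obj → C.Obj → Type
  | 0, p, q => PLift (p = q)
  | n + 1, p, q => (r : C.Obj) × C.Chain n p r × {f : C.Hom r q // C.rank q = C.rank r + 1}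

structure IsUpdown (C : UDData) : Prop where
  rank_finite : ∀ n : ℕ, {p : C.Obj | C.rank p = n}.Finite
  hom_finite : ∀ p q : C.Obj, Finite (C.Hom p q)
  rank_zhat : C.rank C.zhat = 0
  zhat_unique : ∀ p : C.Obj, C.rank p = 0 → p = C.zhat
  from_zhat : ∀ p : C.Obj, Nonempty (C.Hom C.zhat p)
  hom_rank : ∀ p q : C.Obj, Nonempty (C.Hom p q) → C.rank p < C.rank q ∨ p = q
  aut_inv : ∀ (p : C.Obj) (f : C.Hom p p),
    ∃ g : C.Hom p p, C.comp f g = C.idm p ∧ C.comp g f = C.idm p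
  factor : ∀ {p q : C.Obj} (f : C.Hom p q), C.rank p < C.rank q →
    ∃ (r : C.Obj) (g : C.Hom p r) (h : C.Hom r q),
      C.rank r = C.rank p + 1 ∧ C.comp g h = f
  pre_free : ∀ {p q : C.Obj}, C.rank q = C.rank p + 1 → ∀ (a : C.Hom p p) (f : C.Hom p q),
    C.comp a f = f → a = C.idm p
  post_free : ∀ {p q : C.Obj}, C.rank q = C.rank p + 1 → ∀ (b : C.Hom q q) (f : C.Hom p q),
    C.comp f b = f → b = C.idm q

variable (C : UDData)

noncomputable def nAut (p : C.Obj) : ℕ := Nat.card (C.Hom p p)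

noncomputable def u (p q : C.Obj) : ℕ := Nat.card (C.Hom p q) / C.nAut q

noncomputable def d (p q : C.Obj) : ℕ := Nat.card (C.Hom p q) / C.nAut p

noncomputable def uStep (p q : C.Obj) : ℕ := if C.rank q = C.rank p + 1 then C.u p q else 0

noncomputable def dStep (p q : C.Obj) : ℕ := if C.rank q = C.rank p + 1 then C.d p q else 0

open Classical in
noncomputable def uext (C : UDData) : ℕ → C.Obj → C.Obj → ℕ
  | 0, p, q => if p = q then 1 else 0
  | n + 1, p, q => ∑ᶠ r : C.Obj, C.uext n p r * C.uStep r q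

open Classical in
noncomputable def dext (C : UDData) : ℕ → C.Obj → C.Obj → ℕ
  | 0, p, q => if p = q then 1 else 0
  | n + 1, p, q => ∑ᶠ r : C.Obj, C.dext n p r * C.dStep r q

noncomputable def uE (p q : C.Obj) : ℕ := C.uext (C.rank q - C.rank p) p q

noncomputable def dE (p q : C.Obj) : ℕ := C.dext (C.rank q - C.rank p) p q

def Univalent (C : UDData) : Prop := ∀ p : C.Obj, Subsingleton (C.Hom p p)

def Simple (C : UDData) : Prop :=
  (∀ p q : C.Obj, Subsingleton (C.Hom p q)) ∧
    ∀ (n : ℕ) (p q : C.Obj), Subsingleton (C.Chain n p q)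

def EUC (C : UDData) (u : ℕ → ℕ) : Prop :=
  ∀ p : C.Obj, (∑ᶠ q : C.Obj, C.uStep p q) = u (C.rank p)

def EDC (C : UDData) (d : ℕ → ℕ) : Prop :=
  ∀ p : C.Obj, (∑ᶠ q : C.Obj, C.dStep q p) = d (C.rank p)

def Factorial (C : UDData) : Prop :=
  ∀ p : C.Obj, (∑ᶠ q : C.Obj, C.dStep q p) = C.rank p

def prod (C D : UDData) : UDData where
  Obj := C.Obj × D.Obj
  Hom := fun p q => C.Hom p.1 q.1 × D.Hom p.2 q.2
  idm := fun p => (C.idm p.1, D.idm p.2)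
  comp := fun f g => (C.comp f.1 g.1, D.comp f.2 g.2)
  idm_comp := by intro p q f; cases f; simp [C.idm_comp, D.idm_comp]
  comp_idm := by intro p q f; cases f; simp [C.comp_idm, D.comp_idm]
  comp_assoc := by intro p q r s f g h; simp [C.comp_assoc, D.comp_assoc]
  rank := fun p => C.rank p.1 + D.rank p.2
  zhat := (C.zhat, D.zhat)

structure Mor (C D : UDData) where
  obj : C.Obj → D.Obj
  map : ∀ {p q : C.Obj}, C.Hom p q → D.Hom (obj p) (obj q)
  map_idm : ∀ p : C.Obj, map (C.idm p) = D.idm (obj p)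
  map_comp : ∀ {p q r : C.Obj} (f : C.Hom p q) (g : C.Hom q r),
    map (C.comp f g) = D.comp (map f) (map g)
  rank_eq : ∀ p : C.Obj, D.rank (obj p) = C.rank p

def Mor.comp {C D E : UDData} (F : Mor C D) (G : Mor D E) : Mor C E where
  obj := fun p => G.obj (F.obj p)
  map := fun f => G.map (F.map f)
  map_idm := by intro p; show G.map (F.map (C.idm p)) = _; rw [F.map_idm, G.map_idm]
  map_comp := by
    intro p q r f g
    show G.map (F.map (C.comp f g)) = E.comp (G.map (F.map f)) (G.map (F.map g))
    rw [F.map_comp, G.map_comp]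
  rank_eq := by intro p; rw [G.rank_eq, F.rank_eq]

structure Mor.IsGood {C D : UDData} (F : Mor C D) : Prop where
  aut_inj : ∀ p : C.Obj, Function.Injective fun a : C.Hom p p => F.map a
  pre_quot_inj : ∀ {p q₁ q₂ : C.Obj} (f₁ : C.Hom p q₁) (f₂ : C.Hom p q₂),
    C.rank q₁ = C.rank p + 1 → C.rank q₂ = C.rank p + 1 →
    ∀ h : F.obj q₁ = F.obj q₂,
      (∃ a : D.Hom (F.obj p) (F.obj p),
        D.comp a (UDData.cast h (F.map f₁)) = F.map f₂) →
      ∃ e : q₁ = q₂, ∃ a : C.Hom p p, C.comp a (UDData.cast e f₁) = f₂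
  post_quot_inj : ∀ {p q₁ q₂ : C.Obj} (f₁ : C.Hom p q₁) (f₂ : C.Hom p q₂),
    C.rank q₁ = C.rank p + 1 → C.rank q₂ = C.rank p + 1 →
    ∀ h : F.obj q₁ = F.obj q₂,
      (∃ b : D.Hom (F.obj q₂) (F.obj q₂),
        D.comp (UDData.cast h (F.map f₁)) b = F.map f₂) →
      ∃ e : q₁ = q₂, ∃ b : C.Hom q₂ q₂, C.comp (UDData.cast e f₁) b = f₂

def Mor.IsCovering {C' C : UDData} (F : Mor C' C) : Prop :=
  Function.Surjective F.obj ∧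
    ∀ p q : C'.Obj, C'.rank q = C'.rank p + 1 →
      Function.Bijective fun x : (q' : {q' : C'.Obj // F.obj q' = F.obj q}) × C'.Hom p q'.1 =>
        UDData.cast x.1.2 (F.map x.2)

noncomputable def objCoeff (n : ℕ) : ℚ :=
  ∑ᶠ p : C.Obj, if C.rank p = n then ((C.nAut p : ℚ))⁻¹ else 0

noncomputable def objGF : PowerSeries ℚ := PowerSeries.mk C.objCoeff

noncomputable def morGF : PowerSeries ℚ :=
  PowerSeries.mk fun n =>
    ∑ᶠ p : C.Obj, ∑ᶠ q : C.Obj,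
      if C.rank p + C.rank q = n then (C.uStep p q : ℚ) * ((C.nAut p : ℚ))⁻¹ else 0

noncomputable def sqSub (f : PowerSeries ℚ) : PowerSeries ℚ :=
  PowerSeries.mk fun n => if 2 ∣ n then PowerSeries.coeff (n / 2) f else 0

noncomputable def coverCard (n : ℕ) : ℕ := Nat.card ((q : C.Obj) × C.Chain n C.zhat q)

noncomputable def inprod (f g : C.Obj → ℚ) : ℚ := ∑ᶠ p : C.Obj, f p * g p * C.nAut p

noncomputable def Uop (f : C.Obj → ℚ) : C.Obj → ℚ := fun q => ∑ᶠ p : C.Obj, f p * C.uStep p q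

noncomputable def Dop (f : C.Obj → ℚ) : C.Obj → ℚ := fun p => ∑ᶠ q : C.Obj, f q * C.dStep p q

end UDData

namespace UDData

variable {C : UDData}

def Chain.succEquiv (n : ℕ) (p q : C.Obj) :
    C.Chain (n + 1) p q ≃
      (r : {r : C.Obj // C.rank q = C.rank r + 1}) × (C.Chain n p r × C.Hom r q) where
  toFun x := ⟨⟨x.1, x.2.2.2⟩, x.2.1, x.2.2.1⟩
  invFun y := ⟨y.1.1, y.2.1, y.2.2, y.1.2⟩

open Classical in
theorem card_chain_zero (p q : C.Obj) :
    Nat.card (C.Chain 0 p q) = if p = q then 1 else 0 := by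
  by_cases hpq : p = q <;> simp [Chain, hpq]

namespace IsUpdown

variable (h : C.IsUpdown)
include h

theorem finite_setOf_rank_succ_eq (q : C.Obj) : {r : C.Obj | C.rank q = C.rank r + 1}.Finite :=
  (h.rank_finite (C.rank q - 1)).subset fun r (hr : C.rank q = C.rank r + 1) => by
    change C.rank r = C.rank q - 1
    omega

theorem finite_chain : ∀ (n : ℕ) (p q : C.Obj), Finite (C.Chain n p q)
  | 0, p, q => inferInstanceAs (Finite (PLift (p = q)))
  | n + 1, p, q =>
    have := finite_chain n p
    have := h.hom_finite
    have : Finite {r // C.rank q = C.rank r + 1} := (h.finite_setOf_rank_succ_eq q).to_subtype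
    .of_equiv _ (Chain.succEquiv n p q).symm

theorem card_chain_succ (n : ℕ) (p q : C.Obj) :
    Nat.card (C.Chain (n + 1) p q) =
      ∑ᶠ r, Nat.card (C.Chain n p r) *
        if C.rank q = C.rank r + 1 then Nat.card (C.Hom r q) else 0 := by
  have := h.finite_chain n p
  have := h.hom_finite
  have : Finite {r // C.rank q = C.rank r + 1} := (h.finite_setOf_rank_succ_eq q).to_subtype
  have := Fintype.ofFinite {r : C.Obj // C.rank q = C.rank r + 1}
  calc Nat.card (C.Chain (n + 1) p q)
      = ∑ r : {r // C.rank q = C.rank r + 1}, Nat.card (C.Chain n p r) * Nat.card (C.Hom r q) := by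
        rw [Nat.card_congr (Chain.succEquiv n p q), Nat.card_sigma]
        simp only [Nat.card_prod]
    _ = ∑ᶠ (r) (_ : C.rank q = C.rank r + 1), Nat.card (C.Chain n p r) * Nat.card (C.Hom r q) := by
        rw [← finsum_eq_sum_of_fintype]
        exact finsum_subtype_eq_finsum_cond
          (f := fun r => Nat.card (C.Chain n p r) * Nat.card (C.Hom r q)) _
    _ = _ := by simp only [finsum_eq_if, mul_ite, mul_zero]

end IsUpdown

namespace Univalent

variable (hu : C.Univalent)
include hu

theorem nAut_eq_one (p : C.Obj) : C.nAut p = 1 :=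
  Nat.card_eq_one_iff_unique.mpr ⟨hu p, ⟨C.idm p⟩⟩

theorem uStep_eq (p q : C.Obj) :
    C.uStep p q = if C.rank q = C.rank p + 1 then Nat.card (C.Hom p q) else 0 := by
  rw [uStep, u, hu.nAut_eq_one, Nat.div_one]

theorem dStep_eq_uStep (p q : C.Obj) : C.dStep p q = C.uStep p q := by
  rw [dStep, d, uStep, u, hu.nAut_eq_one, hu.nAut_eq_one]

theorem dext_eq_uext (n : ℕ) (p q : C.Obj) : C.dext n p q = C.uext n p q := by
  induction n generalizing q with
  | zero => rfl
  | succ n ih => simp only [dext, uext, ih, hu.dStep_eq_uStep]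

theorem uext_eq_card_chain (h : C.IsUpdown) (n : ℕ) (p q : C.Obj) :
    C.uext n p q = Nat.card (C.Chain n p q) := by
  induction n generalizing q with
  | zero => rw [uext, card_chain_zero]
  | succ n ih => simp only [uext, ih, hu.uStep_eq, h.card_chain_succ]

end Univalent
end UDData

theorem univalent_mult_counts_chains_general (C : UDData) (h : C.IsUpdown) (hu : C.Univalent)
    (p q : C.Obj) (n : ℕ) (hr : C.rank q = C.rank p + n) :
    C.uE p q = Nat.card (C.Chain n p q) ∧ C.dE p q = Nat.card (C.Chain n p q) := by
  have hgap : C.rank q - C.rank p = n := by omega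
  rw [UDData.uE, UDData.dE, hgap, hu.dext_eq_uext, hu.uext_eq_card_chain h]
  exact ⟨rfl, rfl⟩

theorem univalent_mult_counts_chains (C : UDData) (h : C.IsUpdown) (hu : C.Univalent)
    (p q : C.Obj) (n : ℕ) (hn : 0 < n) (hr : C.rank q = C.rank p + n) :
    C.uE p q = Nat.card (C.Chain n p q) ∧ C.dE p q = Nat.card (C.Chain n p q) :=
  univalent_mult_counts_chains_general C h hu p q n hr
end

section
/- If an updown category C is evenly down-covered with sequence {d_n}, then for every object c of rank n, d(0̂;c) = d_n·d_{n−1}·...·d_1. In particular, if C is factorial then d(0̂;c) = n! for every c of rank n. -/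
/-!
Every chain from `0̂` to `c` passes through some `q` covered by `c`, so
`d(0̂;c) = ∑_{q ⋖ c} d(0̂;q) d(q;c)`. By induction on the rank, `d(0̂;q) = d_{n-1} ⋯ d_1` is the
same for every `q` of rank `n - 1`; factoring it out leaves `∑_{q ⋖ c} d(q;c) = d_n`.
-/

namespace UDData

variable {C : UDData}

theorem rank_eq_of_dStep_ne_zero {p q : C.Obj} (hpq : C.dStep p q ≠ 0) :
    C.rank q = C.rank p + 1 := by
  by_contra hrank
  exact hpq (if_neg hrank)

theorem dext_zhat_eq_prod (hzhat : ∀ p : C.Obj, C.rank p = 0 → p = C.zhat) {d : ℕ → ℕ}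
    (hd : C.EDC d) (n : ℕ) (c : C.Obj) (hc : C.rank c = n) :
    C.dext n C.zhat c = ∏ i ∈ Finset.range n, d (i + 1) := by
  induction n generalizing c with
  | zero =>
    obtain rfl := hzhat c hc
    simp [dext]
  | succ n ih =>
    have hterm : ∀ r : C.Obj, C.dext n C.zhat r * C.dStep r c =
        (∏ i ∈ Finset.range n, d (i + 1)) * C.dStep r c := by
      intro r
      by_cases hrc : C.dStep r c = 0
      · simp [hrc]
      · rw [ih r (by have := rank_eq_of_dStep_ne_zero hrc; omega)]
    calc C.dext (n + 1) C.zhat c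
        = ∑ᶠ r : C.Obj, (∏ i ∈ Finset.range n, d (i + 1)) * C.dStep r c := finsum_congr hterm
      _ = (∏ i ∈ Finset.range n, d (i + 1)) * ∑ᶠ r : C.Obj, C.dStep r c := (mul_finsum _ _).symm
      _ = ∏ i ∈ Finset.range (n + 1), d (i + 1) := by rw [hd c, hc, Finset.prod_range_succ]

theorem dE_zhat (hzhat : C.rank C.zhat = 0) (c : C.Obj) :
    C.dE C.zhat c = C.dext (C.rank c) C.zhat c := by
  rw [dE, hzhat, Nat.sub_zero]

theorem IsUpdown.dE_zhat_eq_prod (h : C.IsUpdown) {d : ℕ → ℕ} (hd : C.EDC d) (c : C.Obj) :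
    C.dE C.zhat c = ∏ i ∈ Finset.range (C.rank c), d (i + 1) := by
  rw [dE_zhat h.rank_zhat, dext_zhat_eq_prod h.zhat_unique hd _ c rfl]

end UDData

theorem evenly_downcovered_dE (C : UDData) (h : C.IsUpdown) (d : ℕ → ℕ) (hd : C.EDC d) :
    (∀ c : C.Obj, C.dE C.zhat c = ∏ i ∈ Finset.range (C.rank c), d (i + 1)) ∧
    (C.Factorial → ∀ c : C.Obj, C.dE C.zhat c = (C.rank c).factorial) := by
  refine ⟨h.dE_zhat_eq_prod hd, fun hfact c => ?_⟩
  -- `Factorial` is `EDC` for the sequence `d_n = n`.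
  rw [h.dE_zhat_eq_prod (d := id) hfact c, ← Finset.prod_range_add_one_eq_factorial]
  rfl
end

section
/- For the universal cover π: C̃ → C of a univalent updown category C, the fiber over any object p of rank n has exactly u(0̂;p) elements; hence |C̃_n| = Σ_{p of rank n} u(0̂;p). In particular, if C is factorial, then |π^{-1}(p)| = n! and |C̃_n| = n!·|C_n|, and if C is evenly up-covered with sequence {u_n}, then |C̃_n| = u_0·u_1·...·u_{n−1}. -/
theorem Finite.sigma_of_forall_mem {ι : Type*} {F : ι → Type*} [∀ i, Finite (F i)] {s : Set ι}
    (hs : s.Finite) (hF : ∀ i, F i → i ∈ s) : Finite (Σ i, F i) :=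
  have := hs.to_subtype
  .of_equiv _ (Equiv.sigmaSubtypeEquivOfSubset F (· ∈ s) hF)

theorem Nat.card_sigma_eq_finsum {ι : Type*} {F : ι → Type*} [∀ i, Finite (F i)] {s : Set ι}
    (hs : s.Finite) (hF : ∀ i, F i → i ∈ s) :
    Nat.card (Σ i, F i) = ∑ᶠ i, Nat.card (F i) := by
  have := hs.fintype
  have hsupp : Function.support (fun i => Nat.card (F i)) ⊆ s := fun i hi =>
    have : Nonempty (F i) := (Nat.card_ne_zero.mp hi).1
    hF i (Classical.arbitrary _)
  rw [← Nat.card_congr (Equiv.sigmaSubtypeEquivOfSubset F (· ∈ s) hF), Nat.card_sigma,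
    finsum_eq_sum_of_support_subset _ (s := s.toFinset) (by simpa using hsupp)]
  exact Finset.sum_set_coe (f := fun i => Nat.card (F i)) s

theorem Nat.card_subtype_const (α : Type*) (P : Prop) [Decidable P] :
    Nat.card {_a : α // P} = if P then Nat.card α else 0 := by
  split_ifs with hP
  · exact Nat.card_congr (Equiv.subtypeUnivEquiv fun _ => hP)
  · have : IsEmpty {_a : α // P} := ⟨fun a => hP a.2⟩
    exact Nat.card_of_isEmpty

theorem finsum_ite_const {α : Type*} (P : α → Prop) [DecidablePred P] (c : ℕ) :
    ∑ᶠ a, (if P a then c else 0) = c * Nat.card {a // P a} := by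
  have h1 : ∀ a, (if P a then c else 0) = ∑ᶠ (_ : a ∈ {a | P a}), c * 1 := fun a => by
    rw [finsum_eq_if, mul_one]; rfl
  rw [finsum_congr h1, ← mul_finsum_mem, finsum_one, ← Nat.card_coe_set_eq]
  rfl

namespace UDData

variable {C : UDData}

theorem Chain.rank_eq : ∀ {n : ℕ} {p q : C.Obj}, C.Chain n p q → C.rank q = C.rank p + n
  | 0, _, _, ⟨rfl⟩ => rfl
  | _ + 1, _, _, ⟨_, c, _, hf⟩ => by rw [hf, c.rank_eq]; rfl

theorem card_chain_zhat_of_rank_ne (h : C.IsUpdown) {n : ℕ} {q : C.Obj} (hq : C.rank q ≠ n) :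
    Nat.card (C.Chain n C.zhat q) = 0 := by
  have : IsEmpty (C.Chain n C.zhat q) := ⟨fun c => hq (by rw [c.rank_eq, h.rank_zhat, zero_add])⟩
  exact Nat.card_of_isEmpty

theorem IsUpdown.finite_chain_s13 (h : C.IsUpdown) : ∀ (n : ℕ) (p q : C.Obj), Finite (C.Chain n p q)
  | 0, p, q => inferInstanceAs (Finite (PLift (p = q)))
  | n + 1, p, q =>
    have := h.finite_chain_s13 n p
    have := fun r => h.hom_finite r q
    Finite.sigma_of_forall_mem (h.rank_finite (C.rank q - 1))
      fun r ⟨_, _, hf⟩ => (by omega : C.rank r = C.rank q - 1)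

theorem Univalent.nAut_eq_one_s13 (hu : C.Univalent) (p : C.Obj) : C.nAut p = 1 :=
  have := hu p
  have : Unique (C.Hom p p) := uniqueOfSubsingleton (C.idm p)
  Nat.card_unique

theorem Univalent.dStep_eq_uStep_s13 (hu : C.Univalent) (p q : C.Obj) : C.dStep p q = C.uStep p q := by
  simp only [dStep, uStep, d, u, hu.nAut_eq_one_s13]

theorem Univalent.card_coverHom (hu : C.Univalent) (p q : C.Obj) :
    Nat.card {_f : C.Hom p q // C.rank q = C.rank p + 1} = C.uStep p q := by
  rw [Nat.card_subtype_const, uStep, u, hu.nAut_eq_one_s13, Nat.div_one]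

theorem card_chain_succ (h : C.IsUpdown) (hu : C.Univalent) (n : ℕ) (p q : C.Obj) :
    Nat.card (C.Chain (n + 1) p q) = ∑ᶠ r, Nat.card (C.Chain n p r) * C.uStep r q := by
  have := h.finite_chain_s13 n p
  have := fun r => h.hom_finite r q
  rw [Chain, Nat.card_sigma_eq_finsum (h.rank_finite (C.rank q - 1))
    fun r ⟨_, _, hf⟩ => (by omega : C.rank r = C.rank q - 1)]
  simp only [Nat.card_prod, hu.card_coverHom]

theorem card_chain (h : C.IsUpdown) (hu : C.Univalent) :
    ∀ (n : ℕ) (p q : C.Obj), Nat.card (C.Chain n p q) = C.uext n p q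
  | 0, p, q => by
    rw [uext, Chain]
    split_ifs with hpq <;> simp [hpq]
  | n + 1, p, q => by
    simp only [card_chain_succ h hu, uext, card_chain h hu n]

theorem card_chain_zhat_eq_uE (h : C.IsUpdown) (hu : C.Univalent) (p : C.Obj) :
    Nat.card (C.Chain (C.rank p) C.zhat p) = C.uE C.zhat p := by
  rw [uE, h.rank_zhat, Nat.sub_zero, card_chain h hu]

theorem coverCard_eq_finsum_card (h : C.IsUpdown) (n : ℕ) :
    C.coverCard n = ∑ᶠ q, Nat.card (C.Chain n C.zhat q) :=
  have := h.finite_chain_s13 n C.zhat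
  Nat.card_sigma_eq_finsum (h.rank_finite n) fun q c =>
    (by rw [c.rank_eq, h.rank_zhat, zero_add] : C.rank q = n)

theorem coverCard_eq_finsum_fiber (h : C.IsUpdown) (n : ℕ) :
    C.coverCard n =
      ∑ᶠ p, if C.rank p = n then Nat.card (C.Chain (C.rank p) C.zhat p) else 0 := by
  rw [coverCard_eq_finsum_card h]
  refine finsum_congr fun p => ?_
  split_ifs with hp
  · rw [hp]
  · exact card_chain_zhat_of_rank_ne h hp

theorem coverCard_zero : C.coverCard 0 = 1 := by
  show Nat.card ((q : C.Obj) × PLift (C.zhat = q)) = 1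
  rw [Nat.card_congr (Equiv.sigmaPLiftEquivSubtype _)]
  exact Nat.card_unique

theorem Factorial.card_chain_zhat (h : C.IsUpdown) (hu : C.Univalent) (hf : C.Factorial) :
    ∀ (n : ℕ) (p : C.Obj), C.rank p = n → Nat.card (C.Chain n C.zhat p) = n.factorial
  | 0, p, hp => by rw [h.zhat_unique p hp, card_chain h hu, uext, if_pos rfl, Nat.factorial_zero]
  | n + 1, p, hp => by
    have hterm : ∀ r, Nat.card (C.Chain n C.zhat r) * C.uStep r p = n.factorial * C.dStep r p := by
      intro r
      rw [← hu.dStep_eq_uStep_s13]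
      by_cases hr : C.rank r = n
      · rw [hf.card_chain_zhat h hu n r hr]
      · have : C.dStep r p = 0 := if_neg (by omega)
        rw [this, mul_zero, mul_zero]
    rw [card_chain_succ h hu, finsum_congr hterm, ← mul_finsum, hf p, hp, Nat.factorial_succ,
      mul_comm]

theorem Factorial.coverCard_eq (h : C.IsUpdown) (hu : C.Univalent) (hf : C.Factorial) (n : ℕ) :
    C.coverCard n = n.factorial * Nat.card {p : C.Obj // C.rank p = n} := by
  rw [coverCard_eq_finsum_fiber h, ← finsum_ite_const]
  refine finsum_congr fun p => ?_
  split_ifs with hp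
  · subst hp
    exact hf.card_chain_zhat h hu _ p rfl
  · rfl

theorem Univalent.card_sigma_coverHom (h : C.IsUpdown) (hu : C.Univalent) (p : C.Obj) :
    Nat.card ((q : C.Obj) × {_f : C.Hom p q // C.rank q = C.rank p + 1}) = ∑ᶠ q, C.uStep p q := by
  have := h.hom_finite p
  rw [Nat.card_sigma_eq_finsum (h.rank_finite (C.rank p + 1)) fun _ f => f.2]
  simp only [hu.card_coverHom]

def sigmaChainSuccEquiv (n : ℕ) (p : C.Obj) :
    ((q : C.Obj) × C.Chain (n + 1) p q) ≃
      (r : C.Obj) × C.Chain n p r × (q : C.Obj) × {_f : C.Hom r q // C.rank q = C.rank r + 1} where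
  toFun x := ⟨x.2.1, x.2.2.1, x.1, x.2.2.2⟩
  invFun y := ⟨y.2.2.1, y.1, y.2.1, y.2.2.2⟩

theorem EUC.coverCard_succ (h : C.IsUpdown) (hu : C.Univalent) {u : ℕ → ℕ} (he : C.EUC u)
    (n : ℕ) : C.coverCard (n + 1) = C.coverCard n * u n := by
  have := h.finite_chain_s13 n C.zhat
  have := h.hom_finite
  have := fun r => Finite.sigma_of_forall_mem (h.rank_finite (C.rank r + 1))
    fun q (f : {f : C.Hom r q // C.rank q = C.rank r + 1}) => f.2
  rw [coverCard, Nat.card_congr (sigmaChainSuccEquiv n C.zhat),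
    Nat.card_sigma_eq_finsum (h.rank_finite n) fun r ⟨c, _⟩ =>
      (by rw [c.rank_eq, h.rank_zhat, zero_add] : C.rank r = n),
    coverCard_eq_finsum_card h, finsum_mul]
  refine finsum_congr fun r => ?_
  rw [Nat.card_prod, hu.card_sigma_coverHom h, he r]
  by_cases hr : C.rank r = n
  · rw [hr]
  · rw [card_chain_zhat_of_rank_ne h hr, zero_mul, zero_mul]

theorem EUC.coverCard_eq_prod (h : C.IsUpdown) (hu : C.Univalent) {u : ℕ → ℕ} (he : C.EUC u) :
    ∀ n, C.coverCard n = ∏ i ∈ Finset.range n, u i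
  | 0 => coverCard_zero
  | n + 1 => by rw [he.coverCard_succ h hu, he.coverCard_eq_prod h hu n, Finset.prod_range_succ]

end UDData

theorem universal_cover_fibers (C : UDData) (h : C.IsUpdown) (hu : C.Univalent) :
    (∀ p : C.Obj, Nat.card (C.Chain (C.rank p) C.zhat p) = C.uE C.zhat p) ∧
    (∀ n : ℕ, C.coverCard n = ∑ᶠ p : C.Obj, if C.rank p = n then C.uE C.zhat p else 0) ∧
    (C.Factorial →
      (∀ p : C.Obj, Nat.card (C.Chain (C.rank p) C.zhat p) = (C.rank p).factorial) ∧
      (∀ n : ℕ, C.coverCard n = n.factorial * Nat.card {p : C.Obj // C.rank p = n})) ∧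
    (∀ u : ℕ → ℕ, C.EUC u → ∀ n : ℕ, C.coverCard n = ∏ i ∈ Finset.range n, u i) := by
  refine ⟨UDData.card_chain_zhat_eq_uE h hu, fun n => ?_,
    fun hf => ⟨fun p => hf.card_chain_zhat h hu _ p rfl, hf.coverCard_eq h hu⟩,
    fun u he => he.coverCard_eq_prod h hu⟩
  simp only [UDData.coverCard_eq_finsum_fiber h, UDData.card_chain_zhat_eq_uE h hu]
end

section
/- If C and D are univalent updown categories, then the number of rank-n objects in the universal cover of C × D is Σ_{k=0}^{n} C(n,k)·|C̃_k|·|D̃_{n−k}|, where C̃ and D̃ are the universal covers of C and D. -/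
/-! In `C × D` a covering step raises the rank of exactly one coordinate; since the other
coordinate stays put and `C`, `D` are univalent, its component is an identity. A chain of
length `n` from `(a, b)` is therefore a word `w : Fin n → Bool` (with `true` marking a step in
`C`) together with a chain in `C` of length `countTrue w` and a chain in `D` of length
`countFalse w`. There are `n.choose k` words with `k` letters `true`. -/

section
open Finset

def countTrue {n : ℕ} (w : Fin n → Bool) : ℕ := #{i | w i = true}

def countFalse {n : ℕ} (w : Fin n → Bool) : ℕ := #{i | w i = false}

@[simp] lemma countTrue_cons {n : ℕ} (b : Bool) (w : Fin n → Bool) :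
    countTrue (Fin.cons b w : Fin (n + 1) → Bool) = countTrue w + b.toNat := by
  simp only [countTrue, card_filter, Fin.sum_univ_succ, Fin.cons_zero, Fin.cons_succ]
  cases b <;> simp [add_comm]

@[simp] lemma countFalse_cons {n : ℕ} (b : Bool) (w : Fin n → Bool) :
    countFalse (Fin.cons b w : Fin (n + 1) → Bool) = countFalse w + (!b).toNat := by
  simp only [countFalse, card_filter, Fin.sum_univ_succ, Fin.cons_zero, Fin.cons_succ]
  cases b <;> simp [add_comm]

lemma countFalse_eq_sub {n : ℕ} (w : Fin n → Bool) : countFalse w = n - countTrue w := by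
  have := card_filter_add_card_filter_not (s := univ) (fun i => w i = true)
  simp only [card_univ, Fintype.card_fin, Bool.not_eq_true] at this
  unfold countTrue countFalse; omega

lemma sum_countTrue_countFalse {M : Type*} [AddCommMonoid M] (f : ℕ → ℕ → M) (n : ℕ) :
    ∑ w : Fin n → Bool, f (countTrue w) (countFalse w) =
      ∑ k ∈ range (n + 1), n.choose k • f k (n - k) := by
  let e : (Fin n → Bool) ≃ Finset (Fin n) :=
    { toFun w := {i | w i = true}
      invFun s i := decide (i ∈ s)
      left_inv w := by ext; simp
      right_inv s := by ext; simp }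
  calc ∑ w : Fin n → Bool, f (countTrue w) (countFalse w)
      = ∑ s : Finset (Fin n), f #s (n - #s) := by
        refine Fintype.sum_equiv e _ _ fun w => ?_
        rw [countFalse_eq_sub]; rfl
    _ = ∑ k ∈ range (n + 1), n.choose k • f k (n - k) := by
        rw [← powerset_univ, sum_powerset_apply_card (fun k => f k (n - k)), card_univ,
          Fintype.card_fin]

end

namespace Equiv

def sigmaComm {α β : Type*} (γ : α → β → Type*) : (Σ a, Σ b, γ a b) ≃ Σ b, Σ a, γ a b :=
  sigmaAssocProd.symm.trans <|
    (sigmaCongrLeft' (prodComm α β)).trans (sigmaAssocProd (γ := fun b a => γ a b))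

def prodSigmaDistrib {ι : Type*} (α : Type*) (β : ι → Type*) : α × (Σ i, β i) ≃ Σ i, α × β i :=
  (prodComm _ _).trans <| (sigmaProdDistrib β α).trans <| sigmaCongrRight fun _ => prodComm _ _

def sigmaBool (F : Bool → Type*) : (Σ b, F b) ≃ F false ⊕ F true where
  toFun
    | ⟨false, x⟩ => .inl x
    | ⟨true, x⟩ => .inr x
  invFun := Sum.elim (⟨false, ·⟩) (⟨true, ·⟩)
  left_inv := by rintro ⟨_ | _, _⟩ <;> rfl
  right_inv := by rintro (_ | _) <;> rfl

def sigmaFinSuccBool {n : ℕ} (Y : (Fin (n + 1) → Bool) → Type*) :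
    (Σ w, Y w) ≃
      (Σ w : Fin n → Bool, Y (Fin.cons false w)) ⊕ (Σ w : Fin n → Bool, Y (Fin.cons true w)) :=
  (sigmaCongrLeft (Fin.consEquiv fun _ => Bool)).symm.trans <|
    (sigmaAssocProd (γ := fun b w => Y (Fin.cons b w))).trans (sigmaBool _)

end Equiv

namespace UDData

variable {C D : UDData}

def CoverInto (C : UDData) (q : C.Obj) : Type :=
  Σ r : C.Obj, {f : C.Hom r q // C.rank q = C.rank r + 1}

def chainSuccEquiv (C : UDData) (a q : C.Obj) (n : ℕ) :
    C.Chain (n + 1) a q ≃ Σ s : C.CoverInto q, C.Chain n a s.1 where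
  toFun x := ⟨⟨x.1, x.2.2⟩, x.2.1⟩
  invFun y := ⟨y.1.1, y.2, y.1.2⟩
  left_inv _ := rfl
  right_inv _ := rfl

def chainCongr (C : UDData) {m m' : ℕ} (h : m = m') (a q : C.Obj) :
    C.Chain m a q ≃ C.Chain m' a q :=
  Equiv.cast (congrArg (C.Chain · a q) h)

theorem IsUpdown.finite_sigma_chain (hC : C.IsUpdown) (a : C.Obj) :
    ∀ n, Finite (Σ q, C.Chain n a q)
  | 0 => Finite.of_equiv _ (Equiv.sigmaPLiftEquivSubtype (a = ·)).symm
  | n + 1 => by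
    have := hC.finite_sigma_chain a n
    have (r : C.Obj) : Finite {q // C.rank q = C.rank r + 1} := (hC.rank_finite _).to_subtype
    have := hC.hom_finite
    exact Finite.of_equiv
      (Σ x : (Σ r, C.Chain n a r), Σ q : {q // C.rank q = C.rank x.1 + 1}, C.Hom x.1 q)
      { toFun y := ⟨y.2.1, y.1.1, y.1.2, y.2.2, y.2.1.2⟩
        invFun x := ⟨⟨x.2.1, x.2.2.1⟩, ⟨x.1, x.2.2.2.2⟩, x.2.2.2.1⟩
        left_inv _ := rfl
        right_inv _ := rfl }

theorem IsUpdown.prod_cover_snd_eq (hC : C.IsUpdown) (hD : D.IsUpdown) {r p : C.Obj}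
    {s q : D.Obj} (f : C.Hom r p) (g : D.Hom s q)
    (h : C.rank p + D.rank q = C.rank r + D.rank s + 1) (hr : r ≠ p) :
    s = q ∧ C.rank p = C.rank r + 1 := by
  rcases hC.hom_rank r p ⟨f⟩ with hrp | rfl
  · rcases hD.hom_rank s q ⟨g⟩ with hsq | rfl
    · omega
    · exact ⟨rfl, by omega⟩
  · exact absurd rfl hr

open Classical in
noncomputable def prodCoverIntoEquiv (hC : C.IsUpdown) (hD : D.IsUpdown) (hCu : C.Univalent)
    (hDu : D.Univalent) (p : C.Obj) (q : D.Obj) :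
    (C.prod D).CoverInto (p, q) ≃ C.CoverInto p ⊕ D.CoverInto q where
  toFun x :=
    if e : x.1.1 = p then
      .inr ⟨x.1.2, x.2.1.2, by
        have h : C.rank p + D.rank q = C.rank x.1.1 + D.rank x.1.2 + 1 := x.2.2
        rw [e] at h; omega⟩
    else
      .inl ⟨x.1.1, x.2.1.1, (hC.prod_cover_snd_eq hD x.2.1.1 x.2.1.2 x.2.2 e).2⟩
  invFun := Sum.elim
    (fun s => ⟨(s.1, q), (s.2.1, D.idm q), by have := s.2.2; dsimp only [prod]; omega⟩)
    (fun s => ⟨(p, s.1), (C.idm p, s.2.1), by have := s.2.2; dsimp only [prod]; omega⟩)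
  left_inv := by
    rintro ⟨⟨r, s⟩, ⟨f, g⟩, h⟩
    by_cases e : r = p
    · subst e
      obtain rfl : f = C.idm r := (hCu r).elim _ _
      dsimp only
      rw [dif_pos rfl]; rfl
    · obtain ⟨rfl, -⟩ := hC.prod_cover_snd_eq hD f g h e
      obtain rfl : g = D.idm s := (hDu s).elim _ _
      dsimp only
      rw [dif_neg e]; rfl
  right_inv := by
    rintro (⟨r, _, h⟩ | s)
    · have e : r ≠ p := by rintro rfl; omega
      exact dif_neg e
    · exact dif_pos rfl

noncomputable def prodChainSuccEquiv (hC : C.IsUpdown) (hD : D.IsUpdown) (hCu : C.Univalent)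
    (hDu : D.Univalent) (a p : C.Obj) (b q : D.Obj) (n : ℕ) :
    (C.prod D).Chain (n + 1) (a, b) (p, q) ≃
      (Σ s : C.CoverInto p, (C.prod D).Chain n (a, b) (s.1, q)) ⊕
        (Σ s : D.CoverInto q, (C.prod D).Chain n (a, b) (p, s.1)) :=
  ((C.prod D).chainSuccEquiv (a, b) (p, q) n).trans <|
    (Equiv.sigmaCongrLeft (prodCoverIntoEquiv hC hD hCu hDu p q).symm).symm.trans <|
      Equiv.sumSigmaDistrib _

def sigmaCoverIntoChainProdEquiv {W : Type*} (k : W → ℕ) (Y : W → Type*) (a p : C.Obj) :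
    (Σ s : C.CoverInto p, Σ w, C.Chain (k w) a s.1 × Y w) ≃ Σ w, C.Chain (k w + 1) a p × Y w :=
  (Equiv.sigmaComm _).trans <| Equiv.sigmaCongrRight fun w =>
    (Equiv.sigmaProdDistrib _ _).symm.trans <|
      Equiv.prodCongr (C.chainSuccEquiv a p (k w)).symm (Equiv.refl _)

def sigmaCoverIntoProdChainEquiv {W : Type*} (k : W → ℕ) (Y : W → Type*) (a p : C.Obj) :
    (Σ s : C.CoverInto p, Σ w, Y w × C.Chain (k w) a s.1) ≃ Σ w, Y w × C.Chain (k w + 1) a p :=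
  (Equiv.sigmaComm _).trans <| Equiv.sigmaCongrRight fun w =>
    (Equiv.prodSigmaDistrib _ _).symm.trans <|
      Equiv.prodCongr (Equiv.refl _) (C.chainSuccEquiv a p (k w)).symm

def prodChainZeroEquiv (a p : C.Obj) (b q : D.Obj) :
    (C.prod D).Chain 0 (a, b) (p, q) ≃ C.Chain 0 a p × D.Chain 0 b q where
  toFun h := (⟨congrArg Prod.fst h.down⟩, ⟨congrArg Prod.snd h.down⟩)
  invFun h := ⟨Prod.ext h.1.down h.2.down⟩
  left_inv _ := rfl
  right_inv _ := rfl

noncomputable def prodChainEquiv (hC : C.IsUpdown) (hD : D.IsUpdown) (hCu : C.Univalent)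
    (hDu : D.Univalent) (a : C.Obj) (b : D.Obj) : ∀ (n : ℕ) (p : C.Obj) (q : D.Obj),
    (C.prod D).Chain n (a, b) (p, q) ≃
      Σ w : Fin n → Bool, C.Chain (countTrue w) a p × D.Chain (countFalse w) b q
  | 0, p, q =>
    (prodChainZeroEquiv a p b q).trans <|
      (Equiv.prodCongr (C.chainCongr (by simp [countTrue]) a p)
        (D.chainCongr (by simp [countFalse]) b q)).trans (Equiv.uniqueSigma
        fun w => C.Chain (countTrue w) a p × D.Chain (countFalse w) b q).symm
  | n + 1, p, q =>
    (prodChainSuccEquiv hC hD hCu hDu a p b q n).trans <|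
      (Equiv.sumCongr
        ((Equiv.sigmaCongrRight fun s : C.CoverInto p =>
            prodChainEquiv hC hD hCu hDu a b n s.1 q).trans <|
          (sigmaCoverIntoChainProdEquiv _ _ a p).trans <| Equiv.sigmaCongrRight fun w =>
            Equiv.prodCongr (C.chainCongr (by simp) a p) (D.chainCongr (by simp) b q))
        ((Equiv.sigmaCongrRight fun s : D.CoverInto q =>
            prodChainEquiv hC hD hCu hDu a b n p s.1).trans <|
          (sigmaCoverIntoProdChainEquiv _ _ b q).trans <| Equiv.sigmaCongrRight fun w =>
            Equiv.prodCongr (C.chainCongr (by simp) a p) (D.chainCongr (by simp) b q))).trans <|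
      (Equiv.sumComm _ _).trans
        (Equiv.sigmaFinSuccBool fun w =>
          C.Chain (countTrue w) a p × D.Chain (countFalse w) b q).symm

noncomputable def sigmaProdChainEquiv (hC : C.IsUpdown) (hD : D.IsUpdown) (hCu : C.Univalent)
    (hDu : D.Univalent) (a : C.Obj) (b : D.Obj) (n : ℕ) :
    (Σ x : (C.prod D).Obj, (C.prod D).Chain n (a, b) x) ≃
      Σ w : Fin n → Bool, (Σ p, C.Chain (countTrue w) a p) × (Σ q, D.Chain (countFalse w) b q) :=
  (Equiv.sigmaAssocProd (γ := fun p q => (C.prod D).Chain n (a, b) (p, q))).trans <|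
    (Equiv.sigmaCongrRight fun p => (Equiv.sigmaCongrRight fun q =>
      prodChainEquiv hC hD hCu hDu a b n p q).trans (Equiv.sigmaComm _)).trans <|
    (Equiv.sigmaComm _).trans <| Equiv.sigmaCongrRight fun _ =>
      (Equiv.sigmaCongrRight fun _ => (Equiv.prodSigmaDistrib _ _).symm).trans
        (Equiv.sigmaProdDistrib _ _).symm

end UDData

theorem prod_universal_cover_card (C D : UDData) (hC : C.IsUpdown) (hD : D.IsUpdown)
    (hCu : C.Univalent) (hDu : D.Univalent) (n : ℕ) :
    (C.prod D).coverCard n =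
      ∑ k ∈ Finset.range (n + 1), n.choose k * C.coverCard k * D.coverCard (n - k) := by
  have (k : ℕ) : Finite (Σ p, C.Chain k C.zhat p) := hC.finite_sigma_chain _ k
  have (k : ℕ) : Finite (Σ q, D.Chain k D.zhat q) := hD.finite_sigma_chain _ k
  calc (C.prod D).coverCard n
      = Nat.card (Σ w : Fin n → Bool,
          (Σ p, C.Chain (countTrue w) C.zhat p) × (Σ q, D.Chain (countFalse w) D.zhat q)) :=
        Nat.card_congr (UDData.sigmaProdChainEquiv hC hD hCu hDu _ _ n)
    _ = ∑ w : Fin n → Bool, C.coverCard (countTrue w) * D.coverCard (countFalse w) := by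
        rw [Nat.card_sigma]; simp only [Nat.card_prod]; rfl
    _ = ∑ k ∈ Finset.range (n + 1), n.choose k * C.coverCard k * D.coverCard (n - k) := by
        rw [sum_countTrue_countFalse (fun i j => C.coverCard i * D.coverCard j)]
        simp only [smul_eq_mul, mul_assoc]
end
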